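/- arXiv:1301.6465 — 2 statements merged into one kernel-verified Lean document; each statement's English description precedes it below -/
import Mathlib

section
/- Let f : ℝ^d → ℝ be convex and continuously differentiable, let ν be a (σ-finite) measure on ℝ^d, and for m > 0 define F_m := {z ∈ ℝ^d | ∫ exp(−m·D_f(z, x)) dν(x) < ∞}. If 0 < m ≤ n, x₁ ∈ F_m, and x₀ ∈ ℝ^d is arbitrary, then (1 − m/n)·x₀ + (m/n)·x₁ ∈ F_n. -/
/-!
Write `D` for the Bregman divergence of `f` and `z = (1 - t) • x₀ + t • x₁` with `t = m / n`.
Since `D(·, x) - f` is affine, `D(z, x) = (1 - t) D(x₀, x) + t D(x₁, x) - C`, where the constant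
`C = (1 - t) f x₀ + t f x₁ - f z` does not depend on `x`. Dropping the nonnegative term
`(1 - t) D(x₀, x)` gives `n D(z, x) ≥ m D(x₁, x) - n C`, so `exp (-n D(z, ·))` is dominated by
`exp (n C) • exp (-m D(x₁, ·))`, whose integral is finite.
-/

open MeasureTheory Real

theorem ConvexOn.add_le_of_hasFDerivAt {F : Type*} [NormedAddCommGroup F] [NormedSpace ℝ F]
    {s : Set F} {f : F → ℝ} {f' : F →L[ℝ] ℝ} {x y : F} (hconv : ConvexOn ℝ s f)
    (hx : x ∈ s) (hy : y ∈ s) (hf : HasFDerivAt f f' x) :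
    f x + f' (y - x) ≤ f y := by
  let ℓ : ℝ →ᵃ[ℝ] F := AffineMap.lineMap x y
  have hderiv : HasDerivAt (f ∘ ℓ) (f' (y - x)) 0 :=
    (by simpa [ℓ] using hf : HasFDerivAt f f' (ℓ 0)).comp_hasDerivAt 0
      AffineMap.hasDerivAt_lineMap
  have hslope := (hconv.comp_affineMap ℓ).le_slope_of_hasDerivAt
    (by simpa [ℓ] using hx) (by simpa [ℓ] using hy) zero_lt_one hderiv
  simp only [slope, ℓ, Function.comp_apply, AffineMap.lineMap_apply_zero,
    AffineMap.lineMap_apply_one, sub_zero, inv_one, vsub_eq_sub, smul_eq_mul, one_mul] at hslope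
  linarith

section Bregman

variable {E : Type*} [NormedAddCommGroup E] [InnerProductSpace ℝ E] [CompleteSpace E]

noncomputable def bregmanDiv (f : E → ℝ) (x y : E) : ℝ :=
  f x - f y - inner ℝ (gradient f y) (x - y)

theorem bregmanDiv_nonneg {f : E → ℝ} (hconv : ConvexOn ℝ Set.univ f)
    (hdiff : Differentiable ℝ f) (x y : E) : 0 ≤ bregmanDiv f x y := by
  have hsupport := hconv.add_le_of_hasFDerivAt (Set.mem_univ y) (Set.mem_univ x)
    (hdiff y).hasGradientAt.hasFDerivAt
  simp only [InnerProductSpace.toDual_apply_apply] at hsupport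
  unfold bregmanDiv
  linarith

theorem bregmanDiv_smul_add_smul (f : E → ℝ) {a b : ℝ} (hab : a + b = 1) (x₀ x₁ y : E) :
    bregmanDiv f (a • x₀ + b • x₁) y =
      a * bregmanDiv f x₀ y + b * bregmanDiv f x₁ y -
        (a * f x₀ + b * f x₁ - f (a • x₀ + b • x₁)) := by
  have hsplit : a • x₀ + b • x₁ - y = a • (x₀ - y) + b • (x₁ - y) := by
    conv_lhs => rw [← one_smul ℝ y, ← hab, add_smul]
    rw [smul_sub, smul_sub]; abel
  simp only [bregmanDiv, hsplit, inner_add_right, real_inner_smul_right]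
  linear_combination f y * hab

theorem mul_bregmanDiv_sub_le_bregmanDiv_smul_add_smul {f : E → ℝ}
    (hconv : ConvexOn ℝ Set.univ f) (hdiff : Differentiable ℝ f) {a b : ℝ} (ha : 0 ≤ a)
    (hab : a + b = 1) (x₀ x₁ y : E) :
    b * bregmanDiv f x₁ y - (a * f x₀ + b * f x₁ - f (a • x₀ + b • x₁)) ≤
      bregmanDiv f (a • x₀ + b • x₁) y := by
  rw [bregmanDiv_smul_add_smul f hab]
  nlinarith [bregmanDiv_nonneg hconv hdiff x₀ y]

end Bregman

theorem lintegral_ofReal_exp_neg_lt_top_of_le_add {α : Type*} [MeasurableSpace α]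
    {μ : Measure α} {g h : α → ℝ} (c : ℝ) (hgh : ∀ x, h x ≤ g x + c)
    (hh : ∫⁻ x, ENNReal.ofReal (exp (-h x)) ∂μ < ⊤) :
    ∫⁻ x, ENNReal.ofReal (exp (-g x)) ∂μ < ⊤ :=
  calc ∫⁻ x, ENNReal.ofReal (exp (-g x)) ∂μ
      ≤ ∫⁻ x, ENNReal.ofReal (exp c) * ENNReal.ofReal (exp (-h x)) ∂μ := by
        refine lintegral_mono fun x ↦ ?_
        rw [← ENNReal.ofReal_mul (exp_nonneg c), ← exp_add]
        exact ENNReal.ofReal_le_ofReal (exp_le_exp.mpr (by linarith [hgh x]))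
    _ = ENNReal.ofReal (exp c) * ∫⁻ x, ENNReal.ofReal (exp (-h x)) ∂μ :=
        lintegral_const_mul' _ _ ENNReal.ofReal_ne_top
    _ < ⊤ := ENNReal.mul_lt_top ENNReal.ofReal_lt_top hh

theorem finiteness_sets_mixture_general {d : ℕ}
    (f : EuclideanSpace ℝ (Fin d) → ℝ)
    (hconv : ConvexOn ℝ Set.univ f) (hf : ContDiff ℝ 1 f)
    (D : EuclideanSpace ℝ (Fin d) → EuclideanSpace ℝ (Fin d) → ℝ)
    (hD : ∀ x y, D x y = f x - f y - (inner ℝ (gradient f y) (x - y) : ℝ))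
    (ν : Measure (EuclideanSpace ℝ (Fin d)))
    (F : ℝ → Set (EuclideanSpace ℝ (Fin d)))
    (hF : ∀ m, F m = {z | ∫⁻ x, ENNReal.ofReal (Real.exp (-(m * D z x))) ∂ν < ⊤})
    (m n : ℝ) (hm : 0 < m) (hmn : m ≤ n)
    (x₀ x₁ : EuclideanSpace ℝ (Fin d)) (hx₁ : x₁ ∈ F m) :
    (1 - m / n) • x₀ + (m / n) • x₁ ∈ F n := by
  obtain rfl : D = bregmanDiv f := funext₂ hD
  have hn : 0 < n := hm.trans_le hmn
  rw [hF] at hx₁ ⊢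
  refine lintegral_ofReal_exp_neg_lt_top_of_le_add
    (n * ((1 - m / n) * f x₀ + m / n * f x₁ - f ((1 - m / n) • x₀ + (m / n) • x₁)))
    (fun x ↦ ?_) hx₁
  have hbound := mul_bregmanDiv_sub_le_bregmanDiv_smul_add_smul hconv
    (hf.differentiable one_ne_zero) (sub_nonneg.mpr ((div_le_one hn).mpr hmn))
    (sub_add_cancel 1 (m / n)) x₀ x₁ x
  have hscaled := mul_le_mul_of_nonneg_left hbound hn.le
  rw [mul_sub, ← mul_assoc, mul_div_cancel₀ m hn.ne'] at hscaled
  linarith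

/-- Theorem 3 of the paper: for a convex continuously differentiable
function `f : ℝ^d → ℝ` with Bregman divergence `D`, a σ-finite measure `ν` on `ℝ^d`,
and the sets `F m = {z | ∫ exp(-m·D(z,x)) dν(x) < ∞}`: if `0 < m ≤ n`, `x₁ ∈ F m` and
`x₀` is arbitrary, then `(1 - m/n)·x₀ + (m/n)·x₁ ∈ F n`. -/
theorem finiteness_sets_mixture {d : ℕ}
    (f : EuclideanSpace ℝ (Fin d) → ℝ)
    (hconv : ConvexOn ℝ Set.univ f) (hf : ContDiff ℝ 1 f)
    (D : EuclideanSpace ℝ (Fin d) → EuclideanSpace ℝ (Fin d) → ℝ)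
    (hD : ∀ x y, D x y = f x - f y - (inner ℝ (gradient f y) (x - y) : ℝ))
    (ν : Measure (EuclideanSpace ℝ (Fin d))) [SigmaFinite ν]
    (F : ℝ → Set (EuclideanSpace ℝ (Fin d)))
    (hF : ∀ m, F m = {z | ∫⁻ x, ENNReal.ofReal (Real.exp (-(m * D z x))) ∂ν < ⊤})
    (m n : ℝ) (hm : 0 < m) (hmn : m ≤ n)
    (x₀ x₁ : EuclideanSpace ℝ (Fin d)) (hx₁ : x₁ ∈ F m) :
    (1 - m / n) • x₀ + (m / n) • x₁ ∈ F n :=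
  finiteness_sets_mixture_general f hconv hf D hD ν F hF m n hm hmn x₀ x₁ hx₁
end

section
/- Let Q be the probability measure on ℝ given by the mixture Q = (1/2)·δ₀ + (1/2)·P, where δ₀ is the point mass at 0 and P is the measure with density x ↦ 1/(π·x·(1 + (log x)²)) on (0, ∞) with respect to Lebesgue measure. For β < 0, let Z(β) := ∫ exp(β·x) dQ(x) and let Q_β be the probability measure with density x ↦ exp(β·x)/Z(β) with respect to Q. Then there exists a constant c > 0 such that for all β with −1/2 ≤ β < 0, the variance of Q_β satisfies Var(Q_β) ≥ c/(β²·(1 + (log(−β))²)). -/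
open MeasureTheory
open scoped ENNReal

/-- The exponentiated Cauchy distribution: the measure with density
`x ↦ 1/(π·x·(1+(log x)²))` on `(0, ∞)` with respect to Lebesgue measure. -/
noncomputable def expCauchy : Measure ℝ :=
  volume.withDensity fun x : ℝ =>
    if 0 < x then ENNReal.ofReal (1 / (Real.pi * x * (1 + Real.log x ^ 2))) else 0

/-- `Q = (1/2)·δ₀ + (1/2)·(exponentiated Cauchy)`. -/
noncomputable def Qmix : Measure ℝ :=
  (1 / 2 : ℝ≥0∞) • Measure.dirac (0 : ℝ) + (1 / 2 : ℝ≥0∞) • expCauchy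

/-- The partition function `Z(β) = ∫ exp(β·x) dQ(x)`. -/
noncomputable def Zmix (β : ℝ) : ℝ := ∫ x, Real.exp (β * x) ∂Qmix

/-- The element of the exponential family based on `Q` with canonical parameter `β`:
the measure with density `x ↦ exp(β·x)/Z(β)` with respect to `Q`. -/
noncomputable def Qexp (β : ℝ) : Measure ℝ :=
  Qmix.withDensity fun x : ℝ => ENNReal.ofReal (Real.exp (β * x) / Zmix β)

/-!
The tilted measure `Q_β` keeps an atom of mass `1/(2 Z(β)) ≥ 1/2` at `0`, and a probability
measure with an atom of mass `a` at `0` has variance at least `a · ∫ x²` (Cauchy–Schwarz off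
the atom). The second moment of `Q_β` is at least `½ ∫ x² e^{βx} dP`, and on `[-1/β, -2/β]`
the integrand is at least `e^{-2}/β²` while `P` gives that interval mass of order
`1/(1 + log²(-β))`.
-/

open Real Set

section CauchySchwarz

variable {α : Type*} [MeasurableSpace α] {ν : Measure α} [IsFiniteMeasure ν] {f : α → ℝ}

-- `t ↦ ∫ (f - t)²` is a nonnegative quadratic, so its discriminant is nonpositive.
lemma sq_integral_le_measureReal_univ_mul_integral_sq (hf : MemLp f 2 ν) :
    (∫ x, f x ∂ν) ^ 2 ≤ ν.real univ * ∫ x, f x ^ 2 ∂ν := by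
  have hf₁ : Integrable f ν := hf.integrable one_le_two
  have hf₂ : Integrable (fun x ↦ f x ^ 2) ν := hf.integrable_sq
  have hquad : ∀ t : ℝ,
      0 ≤ ν.real univ * (t * t) + (-2 * ∫ x, f x ∂ν) * t + ∫ x, f x ^ 2 ∂ν := by
    intro t
    have hexpand : ∫ x, (f x - t) ^ 2 ∂ν
        = ν.real univ * (t * t) + (-2 * ∫ x, f x ∂ν) * t + ∫ x, f x ^ 2 ∂ν := by
      simp_rw [sub_sq]
      rw [integral_add (f := fun x ↦ f x ^ 2 - 2 * f x * t)
          (hf₂.sub ((hf₁.const_mul 2).mul_const t)) (integrable_const _),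
        integral_sub hf₂ ((hf₁.const_mul 2).mul_const t), integral_mul_const,
        integral_const_mul, integral_const, smul_eq_mul]
      ring
    exact hexpand ▸ integral_nonneg fun x ↦ sq_nonneg _
  have := discrim_le_zero hquad
  rw [discrim] at this
  nlinarith

end CauchySchwarz

-- Cauchy–Schwarz on `{0}ᶜ`, where all of the mass of `x` and `x²` lives.
lemma measureReal_zero_mul_integral_sq_le {μ : Measure ℝ} [IsProbabilityMeasure μ]
    (hμ : MemLp id 2 μ) :
    μ.real {0} * ∫ x, x ^ 2 ∂μ ≤ ∫ x, x ^ 2 ∂μ - (∫ x, x ∂μ) ^ 2 := by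
  have hmean : ∫ x in {0}ᶜ, x ∂μ = ∫ x, x ∂μ :=
    setIntegral_eq_integral_of_forall_compl_eq_zero fun x hx ↦ by simpa using hx
  have hsecond : ∫ x in {0}ᶜ, x ^ 2 ∂μ = ∫ x, x ^ 2 ∂μ :=
    setIntegral_eq_integral_of_forall_compl_eq_zero fun x hx ↦ by simp_all
  have hcs :=
    sq_integral_le_measureReal_univ_mul_integral_sq (hμ.restrict ({0}ᶜ : Set ℝ))
  simp only [id] at hcs
  rw [measureReal_restrict_apply_univ, hmean, hsecond,
    probReal_compl_eq_one_sub (measurableSet_singleton 0)] at hcs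
  linarith

lemma exp_mul_mul_sq_le {β x : ℝ} (hβ : β < 0) (hx : 0 ≤ x) :
    exp (β * x) * x ^ 2 ≤ 2 / β ^ 2 := by
  have hquad : (β * x) ^ 2 ≤ 2 * exp (-(β * x)) := by
    nlinarith [quadratic_le_exp_of_nonneg (by nlinarith : 0 ≤ -(β * x))]
  rw [le_div_iff₀ (by nlinarith)]
  calc exp (β * x) * x ^ 2 * β ^ 2 = exp (β * x) * (β * x) ^ 2 := by ring
    _ ≤ exp (β * x) * (2 * exp (-(β * x))) := by gcongr
    _ = 2 := by rw [mul_left_comm, ← exp_add, add_neg_cancel, exp_zero, mul_one]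

section NonnegSupport

variable {μ : Measure ℝ} [IsFiniteMeasure μ] {β : ℝ}

lemma integrable_exp_mul_of_ae_nonneg (hμ : ∀ᵐ x ∂μ, 0 ≤ x) (hβ : β ≤ 0) :
    Integrable (fun x ↦ exp (β * x)) μ :=
  Integrable.of_bound (by fun_prop) 1 <| hμ.mono fun x hx ↦ by
    rw [norm_of_nonneg (exp_pos _).le, exp_le_one_iff]
    exact mul_nonpos_of_nonpos_of_nonneg hβ hx

lemma integrable_exp_mul_mul_sq_of_ae_nonneg (hμ : ∀ᵐ x ∂μ, 0 ≤ x) (hβ : β < 0) :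
    Integrable (fun x ↦ exp (β * x) * x ^ 2) μ :=
  Integrable.of_bound (by fun_prop) (2 / β ^ 2) <| hμ.mono fun x hx ↦ by
    rw [norm_of_nonneg (by positivity)]
    exact exp_mul_mul_sq_le hβ hx

end NonnegSupport

lemma integral_exp_mul_le_one {μ : Measure ℝ} [IsProbabilityMeasure μ] {β : ℝ}
    (hμ : ∀ᵐ x ∂μ, 0 ≤ x) (hβ : β ≤ 0) :
    ∫ x, exp (β * x) ∂μ ≤ 1 := by
  calc ∫ x, exp (β * x) ∂μ ≤ ∫ _, 1 ∂μ :=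
        integral_mono_ae (integrable_exp_mul_of_ae_nonneg hμ hβ) (integrable_const 1) <|
          hμ.mono fun x hx ↦ exp_le_one_iff.2 (mul_nonpos_of_nonpos_of_nonneg hβ hx)
    _ = 1 := by simp

section Tilted

variable {α : Type*} [MeasurableSpace α] {μ : Measure α} [NeZero μ] {f : α → ℝ}

lemma le_tilted_real_singleton [MeasurableSingletonClass α] [SFinite μ]
    (hf : Integrable (fun x ↦ exp (f x)) μ) (hZ : ∫ x, exp (f x) ∂μ ≤ 1) (a : α) :
    exp (f a) * μ.real {a} ≤ (μ.tilted f).real {a} := by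
  rw [measureReal_def (μ.tilted f), tilted_apply, lintegral_singleton, ENNReal.toReal_mul,
    ENNReal.toReal_ofReal (by positivity), ← measureReal_def]
  gcongr
  exact le_div_self (exp_pos _).le (integral_exp_pos hf) hZ

lemma integral_exp_mul_le_integral_tilted {g : α → ℝ}
    (hf : Integrable (fun x ↦ exp (f x)) μ) (hZ : ∫ x, exp (f x) ∂μ ≤ 1) (hg : 0 ≤ g) :
    ∫ x, exp (f x) * g x ∂μ ≤ ∫ x, g x ∂(μ.tilted f) := by
  simp_rw [integral_tilted, smul_eq_mul, div_mul_eq_mul_div, integral_div]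
  exact le_div_self (integral_nonneg fun x ↦ mul_nonneg (exp_pos _).le (hg x))
    (integral_exp_pos hf) hZ

end Tilted

noncomputable def expCauchyPDF (x : ℝ) : ℝ := 1 / (π * x * (1 + log x ^ 2))

lemma expCauchyPDF_pos {x : ℝ} (hx : 0 < x) : 0 < expCauchyPDF x := by
  unfold expCauchyPDF; positivity

lemma expCauchy_eq_withDensity :
    expCauchy =
      (volume.restrict (Ioi 0)).withDensity fun x ↦ ENNReal.ofReal (expCauchyPDF x) := by
  rw [← withDensity_indicator measurableSet_Ioi]
  rfl

-- Under `x = exp y` the density becomes the standard Cauchy density.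
lemma exp_mul_expCauchyPDF_exp (y : ℝ) :
    exp y * expCauchyPDF (exp y) = π⁻¹ * (1 + y ^ 2)⁻¹ := by
  have : exp y ≠ 0 := (exp_pos y).ne'
  rw [expCauchyPDF, log_exp]
  field_simp

lemma integrableOn_expCauchyPDF : IntegrableOn expCauchyPDF (Ioi 0) := by
  rw [← range_exp, ← image_univ,
    integrableOn_image_iff_integrableOn_abs_deriv_smul MeasurableSet.univ
      (fun y _ ↦ (hasDerivAt_exp y).hasDerivWithinAt) exp_injective.injOn]
  simp_rw [abs_of_pos (exp_pos _), smul_eq_mul, exp_mul_expCauchyPDF_exp]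
  exact (integrable_inv_one_add_sq.const_mul _).integrableOn

lemma integral_expCauchyPDF : ∫ x in Ioi 0, expCauchyPDF x = 1 := by
  rw [← range_exp, ← image_univ,
    integral_image_eq_integral_abs_deriv_smul MeasurableSet.univ
      (fun y _ ↦ (hasDerivAt_exp y).hasDerivWithinAt) exp_injective.injOn]
  simp_rw [abs_of_pos (exp_pos _), smul_eq_mul, exp_mul_expCauchyPDF_exp]
  rw [Measure.restrict_univ, integral_const_mul, integral_univ_inv_one_add_sq,
    inv_mul_cancel₀ pi_ne_zero]

lemma expCauchy_apply {s : Set ℝ} (hs : MeasurableSet s) :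
    expCauchy s = ENNReal.ofReal (∫ x in s ∩ Ioi 0, expCauchyPDF x) := by
  have hs₀ : MeasurableSet (s ∩ Ioi 0) := hs.inter measurableSet_Ioi
  rw [expCauchy_eq_withDensity, withDensity_apply _ hs, Measure.restrict_restrict hs,
    ofReal_integral_eq_lintegral_ofReal
      (integrableOn_expCauchyPDF.mono_set inter_subset_right)
      ((ae_restrict_mem hs₀).mono fun x hx ↦ (expCauchyPDF_pos hx.2).le)]

instance : IsProbabilityMeasure expCauchy :=
  ⟨by rw [expCauchy_apply MeasurableSet.univ, univ_inter, integral_expCauchyPDF,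
    ENNReal.ofReal_one]⟩

lemma ae_pos_expCauchy : ∀ᵐ x ∂expCauchy, 0 < x := by
  rw [expCauchy_eq_withDensity]
  exact (withDensity_absolutelyContinuous _ _).ae_le (ae_restrict_mem measurableSet_Ioi)

lemma one_add_log_sq_le {T x : ℝ} (hT : 1 ≤ T) (hx : x ∈ Icc T (2 * T)) :
    1 + log x ^ 2 ≤ 3 * (1 + log T ^ 2) := by
  have hT₀ : 0 ≤ log T := log_nonneg hT
  have hx₀ : 0 ≤ log x := log_nonneg (hT.trans hx.1)
  have hxT : log x ≤ log 2 + log T := by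
    rw [← log_mul two_ne_zero (by positivity)]
    exact log_le_log (by linarith [hx.1]) hx.2
  have hlog2 : log 2 ≤ 1 := (log_two_lt_d9.trans (by norm_num)).le
  have hlog2₀ : 0 ≤ log 2 := log_nonneg one_le_two
  nlinarith [pow_le_pow_left₀ hx₀ hxT 2, sq_nonneg (log 2 - log T)]

lemma le_expCauchy_real_Icc {T : ℝ} (hT : 1 ≤ T) :
    1 / (6 * π * (1 + log T ^ 2)) ≤ expCauchy.real (Icc T (2 * T)) := by
  have hT₀ : 0 < T := by linarith
  have hIcc : Icc T (2 * T) ∩ Ioi 0 = Icc T (2 * T) :=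
    inter_eq_left.2 fun x hx ↦ hT₀.trans_le hx.1
  have hpdf : ∀ x ∈ Icc T (2 * T), 1 / (6 * π * T * (1 + log T ^ 2)) ≤ expCauchyPDF x := by
    intro x hx
    have hx₀ : 0 < x := hT₀.trans_le hx.1
    rw [expCauchyPDF]
    gcongr 1 / ?_
    calc π * x * (1 + log x ^ 2) ≤ π * (2 * T) * (3 * (1 + log T ^ 2)) := by
          gcongr
          exacts [hx.2, one_add_log_sq_le hT hx]
      _ = 6 * π * T * (1 + log T ^ 2) := by ring
  have hmass := setIntegral_ge_of_const_le_real measurableSet_Icc (by simp) hpdf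
    (integrableOn_expCauchyPDF.mono_set fun x hx ↦ hT₀.trans_le hx.1)
  rw [Real.volume_real_Icc_of_le (by linarith), show 2 * T - T = T by ring] at hmass
  rw [measureReal_def, expCauchy_apply measurableSet_Icc, hIcc,
    ENNReal.toReal_ofReal (le_trans (by positivity) hmass)]
  convert hmass using 1
  field_simp

instance : IsProbabilityMeasure Qmix :=
  ⟨by simp [Qmix, ENNReal.inv_two_add_inv_two]⟩

lemma ae_nonneg_Qmix : ∀ᵐ x ∂Qmix, 0 ≤ x := by
  rw [Qmix, ae_add_measure_iff]
  exact ⟨Measure.ae_smul_measure ((ae_dirac_iff measurableSet_Ici).2 le_rfl) _,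
    Measure.ae_smul_measure (ae_pos_expCauchy.mono fun x hx ↦ hx.le) _⟩

lemma Qmix_real_singleton_zero : Qmix.real {0} = 1 / 2 := by
  have hP : expCauchy {0} = 0 := by simp [expCauchy_apply]
  simp [measureReal_def, Qmix, hP]

lemma integral_Qmix {g : ℝ → ℝ} (hg : Integrable g Qmix) :
    ∫ x, g x ∂Qmix = (g 0 + ∫ x, g x ∂expCauchy) / 2 := by
  rw [Qmix, integrable_add_measure] at hg
  rw [Qmix, integral_add_measure hg.1 hg.2, integral_smul_measure, integral_smul_measure,
    integral_dirac]
  simp only [smul_eq_mul, one_div, ENNReal.toReal_inv, ENNReal.toReal_ofNat]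
  ring

lemma le_integral_exp_mul_mul_sq_expCauchy {β : ℝ} (hβ₁ : -1 ≤ β) (hβ₀ : β < 0) :
    exp (-2) / (6 * π) / (β ^ 2 * (1 + log (-β) ^ 2))
      ≤ ∫ x, exp (β * x) * x ^ 2 ∂expCauchy := by
  have hβ : β ≠ 0 := hβ₀.ne
  set T := (-β)⁻¹ with hT
  have hT₁ : 1 ≤ T := by
    rw [hT, one_le_inv₀ (by linarith)]
    linarith
  have hint :=
    integrable_exp_mul_mul_sq_of_ae_nonneg (ae_pos_expCauchy.mono fun x hx ↦ hx.le) hβ₀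
  have hbound : ∀ x ∈ Icc T (2 * T), exp (-2) * T ^ 2 ≤ exp (β * x) * x ^ 2 := by
    intro x hx
    have hβT : β * (2 * T) = -2 := by
      rw [hT]
      field_simp
    gcongr
    · nlinarith [hx.2]
    · exact hx.1
  calc exp (-2) / (6 * π) / (β ^ 2 * (1 + log (-β) ^ 2))
      = exp (-2) * T ^ 2 * (1 / (6 * π * (1 + log T ^ 2))) := by
        rw [hT, log_inv]
        field_simp
    _ ≤ exp (-2) * T ^ 2 * expCauchy.real (Icc T (2 * T)) := by
        gcongr
        exact le_expCauchy_real_Icc hT₁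
    _ ≤ ∫ x in Icc T (2 * T), exp (β * x) * x ^ 2 ∂expCauchy :=
        setIntegral_ge_of_const_le_real measurableSet_Icc (measure_ne_top _ _) hbound
          hint.integrableOn
    _ ≤ ∫ x, exp (β * x) * x ^ 2 ∂expCauchy :=
        setIntegral_le_integral hint (.of_forall fun x ↦ by positivity)

/-- there is a constant `c > 0` such that for all `-1/2 ≤ β < 0` the
variance `Var(Q_β) = ∫ x² dQ_β - (∫ x dQ_β)²` of `Q_β` satisfies
`Var(Q_β) ≥ c/(β²·(1 + (log(-β))²))`. -/
theorem variance_lower_bound :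
    ∃ c : ℝ, 0 < c ∧ ∀ β : ℝ, -(1 / 2) ≤ β → β < 0 →
      c / (β ^ 2 * (1 + Real.log (-β) ^ 2))
        ≤ (∫ x, x ^ 2 ∂(Qexp β)) - (∫ x, x ∂(Qexp β)) ^ 2 := by
  refine ⟨exp (-2) / (24 * π), by positivity, fun β hβ₁ hβ₀ ↦ ?_⟩
  have hQexp : Qexp β = Qmix.tilted (β * ·) := rfl
  have hexp := integrable_exp_mul_of_ae_nonneg ae_nonneg_Qmix hβ₀.le
  have hZ := integral_exp_mul_le_one ae_nonneg_Qmix hβ₀.le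
  have hmoment := integrable_exp_mul_mul_sq_of_ae_nonneg ae_nonneg_Qmix hβ₀
  have : IsProbabilityMeasure (Qexp β) := hQexp ▸ isProbabilityMeasure_tilted hexp
  have hL2 : MemLp id 2 (Qexp β) := by
    rw [memLp_two_iff_integrable_sq aestronglyMeasurable_id, hQexp, integrable_tilted_iff hexp]
    exact hmoment
  have hatom : 1 / 2 ≤ (Qexp β).real {0} := by
    rw [hQexp]
    simpa [Qmix_real_singleton_zero] using le_tilted_real_singleton hexp hZ 0
  have hsecond : (∫ x, exp (β * x) * x ^ 2 ∂expCauchy) / 2 ≤ ∫ x, x ^ 2 ∂(Qexp β) := by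
    calc (∫ x, exp (β * x) * x ^ 2 ∂expCauchy) / 2 = ∫ x, exp (β * x) * x ^ 2 ∂Qmix := by
          simp [integral_Qmix hmoment]
      _ ≤ _ := hQexp ▸ integral_exp_mul_le_integral_tilted hexp hZ fun x ↦ sq_nonneg x
  have hP := le_integral_exp_mul_mul_sq_expCauchy (by linarith) hβ₀
  calc exp (-2) / (24 * π) / (β ^ 2 * (1 + log (-β) ^ 2))
      = 1 / 2 * ((exp (-2) / (6 * π) / (β ^ 2 * (1 + log (-β) ^ 2))) / 2) := by ring
    _ ≤ (Qexp β).real {0} * ∫ x, x ^ 2 ∂(Qexp β) := by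
        gcongr
        linarith
    _ ≤ _ := measureReal_zero_mul_integral_sq_le hL2
end
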